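/- Let s and e be composable labelled transition systems, p, p' ∈ Q_s, q, q' ∈ Q_e and σ ∈ (L_{s‖e}^δ)*. If p ⟹(σ↾L_s^δ) p' and q ⟹(σ↾L_e^δ) q', then p ‖ q ⟹σ p' ‖ q'. -/

import Mathlib

/-- Visible labels extended with the quiescence label `δ`. -/
inductive DLabel (A : Type) where
  | act : A → DLabel A
  | δ : DLabel A
deriving DecidableEq

/-- A labelled transition system with state type `S` and label type `A`.
`T p none p'` is an internal (τ) transition; `T p (some a) p'` a visible one.
The set of states is the whole type `S`; the initial state is `q0`. -/
structure LTS (S : Type) (A : Type) where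
  T : S → Option A → S → Prop
  I : Set A
  U : Set A
  q0 : S

namespace LTS

variable {S E F A : Type}

/-- The set of visible labels. -/
def L (s : LTS S A) : Set A := s.I ∪ s.U

/-- Well-formedness of an LTS: countably many states and labels, inputs and
outputs disjoint, and visible transitions labelled in `I ∪ U`. -/
def WF (s : LTS S A) : Prop :=
  Countable S ∧ s.I.Countable ∧ s.U.Countable ∧ Disjoint s.I s.U ∧
    ∀ p a q, s.T p (some a) q → a ∈ s.L

/-- A state is quiescent if it has no output transitions and no τ-transitions. -/
def quiescent (s : LTS S A) (p : S) : Prop :=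
  (∀ x ∈ s.U, ∀ p', ¬ s.T p (some x) p') ∧ (∀ p', ¬ s.T p none p')

/-- Single-step transition relation for δ-extended labels: `δ` is a self-loop
on quiescent states. -/
def dstep (s : LTS S A) (p : S) : DLabel A → S → Prop
  | .act a, p' => s.T p (some a) p'
  | .δ, p' => p = p' ∧ s.quiescent p

/-- `eps p p'`: `p'` is reachable from `p` by finitely many τ-transitions. -/
def eps (s : LTS S A) : S → S → Prop :=
  Relation.ReflTransGen (fun p q => s.T p none q)

/-- Weak transition relation `p ⟹σ p'` over δ-extended traces. -/
def wtrans (s : LTS S A) : S → List (DLabel A) → S → Prop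
  | p, [], p' => s.eps p p'
  | p, ℓ :: σ, p'' => ∃ p1 p2, s.eps p p1 ∧ s.dstep p1 ℓ p2 ∧ s.wtrans p2 σ p''

/-- The δ-extended label set `L^δ` as a set of `DLabel`s. -/
def Ld (s : LTS S A) : Set (DLabel A) := (DLabel.act '' s.L) ∪ {DLabel.δ}

/-- `Utraces s`: δ-extended traces of `s` (from the initial state) that never
pass through a state refusing a subsequent input of the trace. -/
def Utraces (s : LTS S A) : Set (List (DLabel A)) :=
  { σ | (∀ ℓ ∈ σ, ℓ ∈ s.Ld) ∧ (∃ p, s.wtrans s.q0 σ p) ∧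
      ∀ σ1 a σ2, σ = σ1 ++ DLabel.act a :: σ2 → a ∈ s.I →
        ∀ p, s.wtrans s.q0 σ1 p → ∃ p', s.wtrans p [DLabel.act a] p' }

/-- `out p`: the outputs (including quiescence δ) enabled in state `p`. -/
def out (s : LTS S A) (p : S) : Set (DLabel A) :=
  { x | match x with
        | .act a => a ∈ s.U ∧ ∃ p', s.T p (some a) p'
        | .δ => s.quiescent p }

/-- `out` of a set of states. -/
def outSet (s : LTS S A) (P : Set S) : Set (DLabel A) := ⋃ p ∈ P, s.out p

/-- `inp p`: the inputs weakly enabled in state `p`. -/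
def inp (s : LTS S A) (p : S) : Set A :=
  { a | a ∈ s.I ∧ ∃ p', s.wtrans p [DLabel.act a] p' }

/-- The states reached from the initial state after trace `σ`. -/
def after (s : LTS S A) (σ : List (DLabel A)) : Set S :=
  { p' | s.wtrans s.q0 σ p' }

/-- Input-enabledness: every input is weakly enabled in every state. -/
def IOTS (s : LTS S A) : Prop :=
  ∀ q : S, ∀ a ∈ s.I, ∃ q', s.wtrans q [DLabel.act a] q'

/-- Two LTSs are composable iff their output sets are disjoint. -/
def Composable (s : LTS S A) (e : LTS E A) : Prop := Disjoint s.U e.U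

/-- Parallel composition of two LTSs: synchronisation on shared labels,
interleaving on non-shared labels and τ. -/
def par (s : LTS S A) (e : LTS E A) : LTS (S × E) A where
  I := (s.I \ e.U) ∪ (e.I \ s.U)
  U := s.U ∪ e.U
  q0 := (s.q0, e.q0)
  T := fun x ℓ y =>
    (s.T x.1 ℓ y.1 ∧ y.2 = x.2 ∧ (ℓ = none ∨ ∃ a ∈ s.L, ℓ = some a) ∧
      ∀ a ∈ e.L, ℓ ≠ some a) ∨
    (e.T x.2 ℓ y.2 ∧ y.1 = x.1 ∧ (ℓ = none ∨ ∃ a ∈ e.L, ℓ = some a) ∧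
      ∀ a ∈ s.L, ℓ ≠ some a) ∨
    (∃ a ∈ s.L ∩ e.L, ℓ = some a ∧ s.T x.1 (some a) y.1 ∧ e.T x.2 (some a) y.2)

/-- The uioco implementation relation. -/
def uioco (i : LTS E A) (s : LTS S A) : Prop :=
  ∀ σ ∈ s.Utraces, i.outSet (i.after σ) ⊆ s.outSet (s.after σ)

/-- `s.Accepts e`: along every Utrace of `s ‖ e`, every output of `e` that is an
input label of `s` is actually accepted by `s` and is an output of `e`. -/
def Accepts (s : LTS S A) (e : LTS E A) : Prop :=
  ∀ σ ∈ (s.par e).Utraces, ∀ p q, (s.par e).wtrans (s.par e).q0 σ (p, q) →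
    ∀ a, DLabel.act a ∈ e.out q → a ∈ s.I → a ∈ s.inp p ∧ a ∈ e.U

/-- Mutual acceptance. -/
def MutuallyAccepts (s : LTS S A) (e : LTS E A) : Prop := s.Accepts e ∧ e.Accepts s

/-- Isomorphism of LTSs: equal label sets and a bijection on states preserving
the initial state and all transitions (including τ and δ). -/
def Isomorphic (s : LTS S A) (s' : LTS E A) : Prop :=
  s.I = s'.I ∧ s.U = s'.U ∧ ∃ f : S ≃ E, f s.q0 = s'.q0 ∧
    (∀ p p' ℓ, s.T p ℓ p' ↔ s'.T (f p) ℓ (f p')) ∧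
    (∀ p p', s.dstep p DLabel.δ p' ↔ s'.dstep (f p) DLabel.δ (f p'))

open Classical in
/-- Projection of a trace onto a set of labels. -/
noncomputable def proj : List (DLabel A) → Set (DLabel A) → List (DLabel A)
  | [], _ => []
  | ℓ :: σ, 𝓛 => if ℓ ∈ 𝓛 then ℓ :: proj σ 𝓛 else proj σ 𝓛

end LTS

/-! Induction on `σ`, peeling off one label at a time. Quiescence and labels shared by both
components are taken as a synchronised step of the two components, a label of only one
component as a step of that component while the other stays put; a label of neither
cannot occur in a trace of `s ‖ e`. -/

namespace LTS

variable {S E A : Type} (s : LTS S A) (e : LTS E A)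

@[simp]
lemma act_mem_Ld_iff {a : A} : DLabel.act a ∈ s.Ld ↔ a ∈ s.L := by
  simp [Ld]

@[simp]
lemma delta_mem_Ld : DLabel.δ ∈ s.Ld := Or.inr rfl

lemma proj_cons_of_mem {ℓ : DLabel A} {σ : List (DLabel A)} {𝓛 : Set (DLabel A)} (h : ℓ ∈ 𝓛) :
    proj (ℓ :: σ) 𝓛 = ℓ :: proj σ 𝓛 := by
  simp [proj, h]

lemma proj_cons_of_notMem {ℓ : DLabel A} {σ : List (DLabel A)} {𝓛 : Set (DLabel A)}
    (h : ℓ ∉ 𝓛) : proj (ℓ :: σ) 𝓛 = proj σ 𝓛 := by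
  simp [proj, h]

lemma mem_L_or_mem_L_of_mem_par_L {a : A} (h : a ∈ (s.par e).L) : a ∈ s.L ∨ a ∈ e.L := by
  simp only [L, par, Set.mem_union, Set.mem_sdiff] at h ⊢
  tauto

lemma eps_par_left {p p' : S} (q : E) (h : s.eps p p') : (s.par e).eps (p, q) (p', q) := by
  induction h with
  | refl => exact .refl
  | tail _ hstep ih => exact ih.tail (Or.inl ⟨hstep, rfl, Or.inl rfl, by simp⟩)

lemma eps_par_right (p : S) {q q' : E} (h : e.eps q q') : (s.par e).eps (p, q) (p, q') := by
  induction h with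
  | refl => exact .refl
  | tail _ hstep ih => exact ih.tail (Or.inr (Or.inl ⟨hstep, rfl, Or.inl rfl, by simp⟩))

lemma eps_par {p p' : S} {q q' : E} (h1 : s.eps p p') (h2 : e.eps q q') :
    (s.par e).eps (p, q) (p', q') :=
  (eps_par_left s e q h1).trans (eps_par_right s e p' h2)

lemma quiescent_par {p : S} {q : E} (h1 : s.quiescent p) (h2 : e.quiescent q) :
    (s.par e).quiescent (p, q) := by
  constructor
  · rintro x hx ⟨p', q'⟩ (⟨hT, -, -, hne⟩ | ⟨hT, -, -, hne⟩ | ⟨a, -, ha, hTs, hTe⟩)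
    · exact h1.1 x (hx.resolve_right fun hxe => hne x (Or.inr hxe) rfl) p' hT
    · exact h2.1 x (hx.resolve_left fun hxs => hne x (Or.inr hxs) rfl) q' hT
    · cases ha
      exact hx.elim (fun hxs => h1.1 x hxs p' hTs) (fun hxe => h2.1 x hxe q' hTe)
  · rintro ⟨p', q'⟩ (⟨hT, -⟩ | ⟨hT, -⟩ | ⟨a, -, ha, -⟩)
    · exact h1.2 p' hT
    · exact h2.2 q' hT
    · exact nomatch ha

variable {s e}

lemma par_T_left {p p' : S} (q : E) {a : A} (h : s.T p (some a) p') (has : a ∈ s.L)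
    (hae : a ∉ e.L) : (s.par e).T (p, q) (some a) (p', q) :=
  Or.inl ⟨h, rfl, Or.inr ⟨a, has, rfl⟩, fun _ hb hab => hae (Option.some.inj hab ▸ hb)⟩

lemma par_T_right (p : S) {q q' : E} {a : A} (h : e.T q (some a) q') (hae : a ∈ e.L)
    (has : a ∉ s.L) : (s.par e).T (p, q) (some a) (p, q') :=
  Or.inr (Or.inl ⟨h, rfl, Or.inr ⟨a, hae, rfl⟩, fun _ hb hab => has (Option.some.inj hab ▸ hb)⟩)

lemma par_T_sync {p p' : S} {q q' : E} {a : A} (h1 : s.T p (some a) p') (h2 : e.T q (some a) q')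
    (has : a ∈ s.L) (hae : a ∈ e.L) : (s.par e).T (p, q) (some a) (p', q') :=
  Or.inr (Or.inr ⟨a, ⟨has, hae⟩, rfl, h1, h2⟩)

lemma exists_par_step_of_wtrans_proj_cons {p p' : S} {q q' : E} {ℓ : DLabel A}
    {σ : List (DLabel A)} (hℓ : ℓ ∈ (s.par e).Ld)
    (h1 : s.wtrans p (proj (ℓ :: σ) s.Ld) p') (h2 : e.wtrans q (proj (ℓ :: σ) e.Ld) q') :
    ∃ x y : S × E, (s.par e).eps (p, q) x ∧ (s.par e).dstep x ℓ y ∧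
      s.wtrans y.1 (proj σ s.Ld) p' ∧ e.wtrans y.2 (proj σ e.Ld) q' := by
  cases ℓ with
  | δ =>
    rw [proj_cons_of_mem (delta_mem_Ld s)] at h1
    rw [proj_cons_of_mem (delta_mem_Ld e)] at h2
    obtain ⟨p1, _, hp, ⟨rfl, hqp⟩, hwp⟩ := h1
    obtain ⟨q1, _, hq, ⟨rfl, hqq⟩, hwq⟩ := h2
    exact ⟨(p1, q1), (p1, q1), eps_par s e hp hq, ⟨rfl, quiescent_par s e hqp hqq⟩, hwp, hwq⟩
  | act a =>
    have hL := mem_L_or_mem_L_of_mem_par_L s e ((act_mem_Ld_iff _).1 hℓ)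
    by_cases has : a ∈ s.L <;> by_cases hae : a ∈ e.L
    · rw [proj_cons_of_mem ((act_mem_Ld_iff s).2 has)] at h1
      rw [proj_cons_of_mem ((act_mem_Ld_iff e).2 hae)] at h2
      obtain ⟨p1, p2, hp, hTp, hwp⟩ := h1
      obtain ⟨q1, q2, hq, hTq, hwq⟩ := h2
      exact ⟨(p1, q1), (p2, q2), eps_par s e hp hq, par_T_sync hTp hTq has hae, hwp, hwq⟩
    · rw [proj_cons_of_mem ((act_mem_Ld_iff s).2 has)] at h1
      rw [proj_cons_of_notMem (mt (act_mem_Ld_iff e).1 hae)] at h2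
      obtain ⟨p1, p2, hp, hTp, hwp⟩ := h1
      exact ⟨(p1, q), (p2, q), eps_par_left s e q hp, par_T_left q hTp has hae, hwp, h2⟩
    · rw [proj_cons_of_notMem (mt (act_mem_Ld_iff s).1 has)] at h1
      rw [proj_cons_of_mem ((act_mem_Ld_iff e).2 hae)] at h2
      obtain ⟨q1, q2, hq, hTq, hwq⟩ := h2
      exact ⟨(p, q1), (p, q2), eps_par_right s e p hq, par_T_right p hTq hae has, h1, hwq⟩
    · exact (hL.elim has hae).elim

end LTS

theorem wtrans_par_of_proj_general {S E A : Type} (s : LTS S A) (e : LTS E A)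
    (p p' : S) (q q' : E) (σ : List (DLabel A))
    (hσ : ∀ x ∈ σ, x ∈ (s.par e).Ld)
    (h1 : s.wtrans p (LTS.proj σ s.Ld) p')
    (h2 : e.wtrans q (LTS.proj σ e.Ld) q') :
    (s.par e).wtrans (p, q) σ (p', q') := by
  induction σ generalizing p q with
  | nil => exact LTS.eps_par s e h1 h2
  | cons ℓ σ ih =>
    obtain ⟨x, y, hx, hxy, hy1, hy2⟩ :=
      LTS.exists_par_step_of_wtrans_proj_cons (hσ ℓ List.mem_cons_self) h1 h2
    exact ⟨x, y, hx, hxy, ih y.1 y.2 (fun z hz => hσ z (List.mem_cons_of_mem ℓ hz)) hy1 hy2⟩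

/-- weak transitions of the components along the projected traces
yield a weak transition of the composition. -/
theorem wtrans_par_of_proj {S E A : Type} (s : LTS S A) (e : LTS E A)
    (hs : s.WF) (he : e.WF) (hc : LTS.Composable s e)
    (p p' : S) (q q' : E) (σ : List (DLabel A))
    (hσ : ∀ x ∈ σ, x ∈ (s.par e).Ld)
    (h1 : s.wtrans p (LTS.proj σ s.Ld) p')
    (h2 : e.wtrans q (LTS.proj σ e.Ld) q') :
    (s.par e).wtrans (p, q) σ (p', q') :=
  wtrans_par_of_proj_general s e p p' q q' σ hσ h1 h2
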